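/- arXiv:1411.6497 — 3 statements merged into one kernel-verified Lean document; each statement's English description precedes it below -/
import Mathlib

section
/- Let L be an algebraic lattice and let φ₁, φ₂ be algebraic (finitary) closure operators on L. Then the pointwise meet x ↦ φ₁(x) ⊓ φ₂(x) is again an algebraic closure operator on L. -/
/-- A closure operator on a complete lattice: extensive, idempotent and isotone. -/
def IsClosureOp {L : Type*} [CompleteLattice L] (φ : L → L) : Prop :=
  (∀ x, x ≤ φ x) ∧ (∀ x, φ (φ x) = φ x) ∧ (∀ x y : L, x ≤ y → φ x ≤ φ y)

/-- Compact element of a complete lattice, with its meaning in the older Mathlib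
(`CompleteLattice.IsCompactElement`, since removed). -/
def CompleteLattice.IsCompactElement {α : Type*} [CompleteLattice α] (k : α) :=
  ∀ s : Set α, k ≤ sSup s → ∃ t : Finset α, ↑t ⊆ s ∧ k ≤ t.sup id

/-- A map on a complete lattice is finitary if its value at `x` is the sup of its
values at the compact elements below `x`. -/
def Finitary {L : Type*} [CompleteLattice L] (φ : L → L) : Prop :=
  ∀ x : L, φ x = ⨆ k ∈ {k : L | CompleteLattice.IsCompactElement k ∧ k ≤ x}, φ k

/-! In an algebraic lattice it suffices to bound the compact elements below `φ₁ x ⊓ φ₂ x`.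
Such a `c` lies below `φ₁ k₁` and below `φ₂ k₂` for compact `k₁, k₂ ≤ x`, hence below both
values at the compact element `k₁ ⊔ k₂ ≤ x`. -/

/-- Here `IsCompactElement` is Mathlib's directed-set notion, not the finite-subcover one used in
`Finitary`; the two agree in a complete lattice. -/
theorem finitary_iff {L : Type*} [CompleteLattice L] {φ : L → L} :
    Finitary φ ↔ ∀ x, φ x = ⨆ k ∈ {k : L | IsCompactElement k ∧ k ≤ x}, φ k := by
  simp only [Finitary, CompleteLattice.IsCompactElement,
    ← CompleteLattice.isCompactElement_iff_exists_le_sSup_of_le_sSup]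

theorem IsCompactElement.sup {α : Type*} [CompleteLattice α] {a b : α}
    (ha : IsCompactElement a) (hb : IsCompactElement b) : IsCompactElement (a ⊔ b) := by
  classical
  simpa using CompleteLattice.isCompactElement_finsetSup {a, b} (f := id) (by simp [ha, hb])

theorem IsClosureOp.monotone {L : Type*} [CompleteLattice L] {φ : L → L} (h : IsClosureOp φ) :
    Monotone φ :=
  fun x y hxy => h.2.2 x y hxy

theorem IsClosureOp.inf {L : Type*} [CompleteLattice L] {φ₁ φ₂ : L → L}
    (h₁ : IsClosureOp φ₁) (h₂ : IsClosureOp φ₂) : IsClosureOp (fun x => φ₁ x ⊓ φ₂ x) := by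
  obtain ⟨le₁, idem₁, mono₁⟩ := h₁
  obtain ⟨le₂, idem₂, mono₂⟩ := h₂
  refine ⟨fun x => le_inf (le₁ x) (le₂ x), fun x => ?_,
    fun x y hxy => inf_le_inf (mono₁ x y hxy) (mono₂ x y hxy)⟩
  refine le_antisymm (inf_le_inf ?_ ?_) (le_inf (le₁ _) (le₂ _))
  · exact (mono₁ _ _ inf_le_left).trans_eq (idem₁ x)
  · exact (mono₂ _ _ inf_le_right).trans_eq (idem₂ x)

theorem Finitary.exists_isCompactElement_le {L : Type*} [CompleteLattice L] {φ : L → L}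
    (hmono : Monotone φ) (hfin : Finitary φ) {c x : L} (hc : IsCompactElement c)
    (hcx : c ≤ φ x) : ∃ k, IsCompactElement k ∧ k ≤ x ∧ c ≤ φ k := by
  rw [finitary_iff.1 hfin x, iSup_subtype'] at hcx
  obtain ⟨s, hs⟩ := CompleteLattice.IsCompactElement.exists_finset_of_le_iSup L hc _ hcx
  refine ⟨s.sup Subtype.val, CompleteLattice.isCompactElement_finsetSup s fun k _ => k.2.1,
    Finset.sup_le fun k _ => k.2.2, hs.trans (iSup₂_le fun k hk => hmono (Finset.le_sup hk))⟩

theorem Finitary.inf {L : Type*} [CompleteLattice L] [IsCompactlyGenerated L] {φ₁ φ₂ : L → L}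
    (hmono₁ : Monotone φ₁) (hmono₂ : Monotone φ₂) (hfin₁ : Finitary φ₁) (hfin₂ : Finitary φ₂) :
    Finitary (fun x => φ₁ x ⊓ φ₂ x) := by
  refine finitary_iff.2 fun x => le_antisymm (le_iff_compact_le_imp.2 fun c hc hcx => ?_)
    (iSup₂_le fun k hk => inf_le_inf (hmono₁ hk.2) (hmono₂ hk.2))
  obtain ⟨k₁, hk₁, hk₁x, hck₁⟩ := hfin₁.exists_isCompactElement_le hmono₁ hc (hcx.trans inf_le_left)
  obtain ⟨k₂, hk₂, hk₂x, hck₂⟩ :=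
    hfin₂.exists_isCompactElement_le hmono₂ hc (hcx.trans inf_le_right)
  calc c ≤ φ₁ (k₁ ⊔ k₂) ⊓ φ₂ (k₁ ⊔ k₂) :=
        le_inf (hck₁.trans (hmono₁ le_sup_left)) (hck₂.trans (hmono₂ le_sup_right))
    _ ≤ ⨆ k ∈ {k : L | IsCompactElement k ∧ k ≤ x}, φ₁ k ⊓ φ₂ k :=
        le_biSup (fun k => φ₁ k ⊓ φ₂ k) ⟨hk₁.sup hk₂, sup_le hk₁x hk₂x⟩

/-- The pointwise meet of two algebraic (finitary) closure operators on an
algebraic lattice is again an algebraic closure operator. -/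
theorem meet_of_algebraic_closure_operators {L : Type*} [CompleteLattice L]
    [IsCompactlyGenerated L] (φ₁ φ₂ : L → L)
    (h₁ : IsClosureOp φ₁) (h₂ : IsClosureOp φ₂)
    (f₁ : Finitary φ₁) (f₂ : Finitary φ₂) :
    IsClosureOp (fun x => φ₁ x ⊓ φ₂ x) ∧ Finitary (fun x => φ₁ x ⊓ φ₂ x) :=
  ⟨h₁.inf h₂, f₁.inf h₁.monotone h₂.monotone f₂⟩
end

section
/- Let L be an algebraic lattice and let (φ_i)_{i∈I} be a family of algebraic (finitary) closure operators on L. Define τ : L → L by τ(x) = ⨆ {⨅_{i∈I} φ_i(k) : k compact, k ≤ x}. Then τ is an algebraic closure operator, τ(x) ≤ φ_i(x) for every i ∈ I and x ∈ L, and every algebraic closure operator ρ with ρ(x) ≤ φ_i(x) for all i ∈ I and x ∈ L satisfies ρ(x) ≤ τ(x) for all x ∈ L. That is, τ is the greatest lower bound of the family (φ_i) among algebraic closure operators. -/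
section

variable {L : Type*} [CompleteLattice L]

namespace CompleteLattice

theorem isCompactElement_iff {k : L} : IsCompactElement k ↔ _root_.IsCompactElement k :=
  (isCompactElement_iff_exists_le_sSup_of_le_sSup L k).symm

theorem isCompactElement_bot : IsCompactElement (⊥ : L) :=
  fun _ _ => ⟨∅, by simp⟩

theorem IsCompactElement.sup {a b : L} (ha : IsCompactElement a) (hb : IsCompactElement b) :
    IsCompactElement (a ⊔ b) := by
  classical
  intro s hs
  obtain ⟨ta, hta, hata⟩ := ha s (le_sup_left.trans hs)
  obtain ⟨tb, htb, hbtb⟩ := hb s (le_sup_right.trans hs)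
  refine ⟨ta ∪ tb, by simp [hta, htb], ?_⟩
  rw [Finset.sup_union]
  exact sup_le_sup hata hbtb

theorem directedOn_compact_le (x : L) :
    DirectedOn (· ≤ ·) {k : L | IsCompactElement k ∧ k ≤ x} :=
  fun a ha b hb => ⟨a ⊔ b, ⟨ha.1.sup hb.1, sup_le ha.2 hb.2⟩, le_sup_left, le_sup_right⟩

end CompleteLattice

theorem IsClosureOp.monotone_s9 {f : L → L} (hf : IsClosureOp f) : Monotone f :=
  fun x y => hf.2.2 x y

theorem IsClosureOp.iInf {I : Type*} {φ : I → L → L} (hφ : ∀ i, IsClosureOp (φ i)) :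
    IsClosureOp (fun x => ⨅ i, φ i x) := by
  refine ⟨fun x => le_iInf fun i => (hφ i).1 x, fun x => le_antisymm ?_ ?_,
    fun _ _ hxy => iInf_mono fun i => (hφ i).monotone_s9 hxy⟩
  · refine le_iInf fun i => ?_
    calc ⨅ j, φ j (⨅ i, φ i x) ≤ φ i (⨅ i, φ i x) := iInf_le _ i
      _ ≤ φ i (φ i x) := (hφ i).monotone_s9 (iInf_le _ i)
      _ = φ i x := (hφ i).2.1 x
  · exact le_iInf fun i => (hφ i).1 _

def finitaryPart (f : L → L) (x : L) : L :=
  ⨆ k ∈ {k : L | CompleteLattice.IsCompactElement k ∧ k ≤ x}, f k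

variable {f : L → L} {k x : L}

theorem le_finitaryPart (hk : CompleteLattice.IsCompactElement k) (hkx : k ≤ x) :
    f k ≤ finitaryPart f x :=
  le_biSup f (show k ∈ {k : L | CompleteLattice.IsCompactElement k ∧ k ≤ x} from ⟨hk, hkx⟩)

theorem finitaryPart_le {c : L}
    (h : ∀ k, CompleteLattice.IsCompactElement k → k ≤ x → f k ≤ c) :
    finitaryPart f x ≤ c :=
  iSup₂_le fun k hk => h k hk.1 hk.2

theorem finitaryPart_mono {x y : L} (hxy : x ≤ y) : finitaryPart f x ≤ finitaryPart f y :=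
  finitaryPart_le fun _ hk hkx => le_finitaryPart hk (hkx.trans hxy)

theorem finitaryPart_le_self (hf : Monotone f) (x : L) : finitaryPart f x ≤ f x :=
  finitaryPart_le fun _ _ hkx => hf hkx

theorem finitary_finitaryPart (f : L → L) : Finitary (finitaryPart f) := fun _ =>
  le_antisymm (finitaryPart_le fun _ hk hkx => (le_finitaryPart hk le_rfl).trans
      (le_finitaryPart (f := finitaryPart f) hk hkx))
    (finitaryPart_le fun _ _ hkx => finitaryPart_mono hkx)

theorem Finitary.le_finitaryPart {ρ : L → L} (hρ : Finitary ρ) (hρf : ∀ x, ρ x ≤ f x) (x : L) :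
    ρ x ≤ finitaryPart f x := by
  rw [hρ x]
  exact finitaryPart_le fun k hk hkx => (hρf k).trans (_root_.le_finitaryPart hk hkx)

theorem self_le_finitaryPart [IsCompactlyGenerated L] (hf : ∀ x, x ≤ f x) (x : L) :
    x ≤ finitaryPart f x := by
  conv_lhs => rw [← sSup_compact_le_eq x]
  exact sSup_le fun k hk =>
    (hf k).trans (le_finitaryPart (CompleteLattice.isCompactElement_iff.mpr hk.1) hk.2)

theorem exists_le_of_le_finitaryPart (hf : Monotone f) {c : L}
    (hc : CompleteLattice.IsCompactElement c) (hcx : c ≤ finitaryPart f x) :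
    ∃ k, CompleteLattice.IsCompactElement k ∧ k ≤ x ∧ c ≤ f k := by
  set S := f '' {k : L | CompleteLattice.IsCompactElement k ∧ k ≤ x}
  have hS : finitaryPart f x = sSup S := by rw [sSup_image]; rfl
  have hne : S.Nonempty := .image f ⟨⊥, CompleteLattice.isCompactElement_bot, bot_le⟩
  have hdir : DirectedOn (· ≤ ·) S :=
    (CompleteLattice.directedOn_compact_le x).mono_comp fun _ _ h => hf h
  obtain ⟨_, ⟨k, hk, rfl⟩, hck⟩ :=
    (CompleteLattice.isCompactElement_iff_le_of_directed_sSup_le L c).mp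
      (CompleteLattice.isCompactElement_iff.mp hc) S hne hdir (hS ▸ hcx)
  exact ⟨k, hk.1, hk.2, hck⟩

theorem IsClosureOp.finitaryPart [IsCompactlyGenerated L] (hf : IsClosureOp f) :
    IsClosureOp (finitaryPart f) := by
  refine ⟨self_le_finitaryPart hf.1, fun x => le_antisymm ?_ (self_le_finitaryPart hf.1 _),
    fun _ _ => finitaryPart_mono⟩
  refine finitaryPart_le fun c hc hcx => ?_
  obtain ⟨k, hk, hkx, hck⟩ := exists_le_of_le_finitaryPart hf.monotone_s9 hc hcx
  calc f c ≤ f (f k) := hf.monotone_s9 hck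
    _ = f k := hf.2.1 k
    _ ≤ _ := le_finitaryPart hk hkx

end

theorem tau_is_glb_general {L : Type*} [CompleteLattice L] [IsCompactlyGenerated L]
    {I : Type*} (φ : I → L → L)
    (hco : ∀ i, IsClosureOp (φ i)) :
    IsClosureOp (fun x : L =>
      ⨆ k ∈ {k : L | CompleteLattice.IsCompactElement k ∧ k ≤ x}, ⨅ i, φ i k) ∧
    Finitary (fun x : L =>
      ⨆ k ∈ {k : L | CompleteLattice.IsCompactElement k ∧ k ≤ x}, ⨅ i, φ i k) ∧
    (∀ (i : I) (x : L),
      (⨆ k ∈ {k : L | CompleteLattice.IsCompactElement k ∧ k ≤ x}, ⨅ i, φ i k) ≤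
        φ i x) ∧
    (∀ ρ : L → L, IsClosureOp ρ → Finitary ρ → (∀ (i : I) (x : L), ρ x ≤ φ i x) →
      ∀ x : L, ρ x ≤
        ⨆ k ∈ {k : L | CompleteLattice.IsCompactElement k ∧ k ≤ x}, ⨅ i, φ i k) := by
  have hinf := IsClosureOp.iInf hco
  refine ⟨hinf.finitaryPart, finitary_finitaryPart _, fun i x => ?_, fun ρ _ hρ hρφ => ?_⟩
  · exact (finitaryPart_le_self hinf.monotone_s9 x).trans (iInf_le _ i)
  · exact hρ.le_finitaryPart fun x => le_iInf (hρφ · x)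

/-- For a family of algebraic closure operators `φ_i` on an algebraic lattice,
`τ x = ⨆ {⨅ i, φ_i k : k compact, k ≤ x}` is an algebraic closure operator, a
lower bound of the family, and greatest among algebraic closure operators that
are lower bounds of the family. -/
theorem tau_is_glb {L : Type*} [CompleteLattice L] [IsCompactlyGenerated L]
    {I : Type*} (φ : I → L → L)
    (hco : ∀ i, IsClosureOp (φ i)) (hfin : ∀ i, Finitary (φ i)) :
    IsClosureOp (fun x : L =>
      ⨆ k ∈ {k : L | CompleteLattice.IsCompactElement k ∧ k ≤ x}, ⨅ i, φ i k) ∧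
    Finitary (fun x : L =>
      ⨆ k ∈ {k : L | CompleteLattice.IsCompactElement k ∧ k ≤ x}, ⨅ i, φ i k) ∧
    (∀ (i : I) (x : L),
      (⨆ k ∈ {k : L | CompleteLattice.IsCompactElement k ∧ k ≤ x}, ⨅ i, φ i k) ≤
        φ i x) ∧
    (∀ ρ : L → L, IsClosureOp ρ → Finitary ρ → (∀ (i : I) (x : L), ρ x ≤ φ i x) →
      ∀ x : L, ρ x ≤
        ⨆ k ∈ {k : L | CompleteLattice.IsCompactElement k ∧ k ≤ x}, ⨅ i, φ i k) :=
  tau_is_glb_general φ hco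
end

section
/- Let L be an algebraic lattice, let a, b ∈ L be compact, and let v ∈ L be arbitrary. For w ∈ L define φ^w_{a,b} : L → L by φ^w_{a,b}(x) = x ⊔ w ⊔ b if a ≤ x ⊔ w, and φ^w_{a,b}(x) = x ⊔ w otherwise. Then for every x ∈ L, φ^v_{a,b}(x) = ⨆ {φ^k_{a,b}(x) : k compact, k ≤ v}; that is, φ^v_{a,b} is the (pointwise, directed) join of the operators φ^k_{a,b} over compact k ≤ v. -/
/-!
Monotonicity in `w` gives `⨆ φ^k ≤ φ^v`. Conversely, the compact `k ≤ v` form a directed set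
with join `v`, so `x ⊔ v` is the directed join of the `x ⊔ k`; and when `a ≤ x ⊔ v`,
compactness of `a` yields a single compact `k ≤ v` with `a ≤ x ⊔ k`, whose `φ^k` already
contributes `b`.
-/

open scoped Classical in
/-- The operator `φ^w_{a,b}` sending `x` to `x ⊔ w ⊔ b` when `a ≤ x ⊔ w`, and to
`x ⊔ w` otherwise. -/
noncomputable def phiV {L : Type*} [CompleteLattice L] (w a b : L) (x : L) : L :=
  if a ≤ x ⊔ w then x ⊔ w ⊔ b else x ⊔ w

section CompactElements

variable {L : Type*} [CompleteLattice L]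

theorem isCompactElement_bot : IsCompactElement (⊥ : L) := by
  simpa using CompleteLattice.isCompactElement_finsetSup (∅ : Finset L) (f := id) (by simp)

theorem IsCompactElement.sup_s16 {k₁ k₂ : L} (h₁ : IsCompactElement k₁)
    (h₂ : IsCompactElement k₂) : IsCompactElement (k₁ ⊔ k₂) := by
  classical
  simpa using CompleteLattice.isCompactElement_finsetSup {k₁, k₂} (f := id)
    (by simp [h₁, h₂])

theorem directedOn_compact_le (v : L) :
    DirectedOn (· ≤ ·) {k : L | IsCompactElement k ∧ k ≤ v} :=
  fun k₁ hk₁ k₂ hk₂ =>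
    ⟨k₁ ⊔ k₂, ⟨hk₁.1.sup_s16 hk₂.1, sup_le hk₁.2 hk₂.2⟩, le_sup_left, le_sup_right⟩

variable [IsCompactlyGenerated L]

theorem sup_eq_iSup_sup_compact_le (x v : L) :
    x ⊔ v = ⨆ k ∈ {k : L | IsCompactElement k ∧ k ≤ v}, x ⊔ k := by
  conv_lhs => rw [← sSup_compact_le_eq v, sSup_eq_iSup]
  exact sup_biSup ⟨⊥, isCompactElement_bot, bot_le⟩

theorem IsCompactElement.exists_compact_le_of_le_sup {a : L} (ha : IsCompactElement a)
    {x v : L} (h : a ≤ x ⊔ v) : ∃ k, IsCompactElement k ∧ k ≤ v ∧ a ≤ x ⊔ k := by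
  set S := {k : L | IsCompactElement k ∧ k ≤ v}
  have hdir : DirectedOn (· ≤ ·) ((x ⊔ ·) '' S) :=
    (directedOn_compact_le v).mono_comp fun _ _ hle => sup_le_sup_left hle x
  have hsup : a ≤ sSup ((x ⊔ ·) '' S) := by
    rwa [sSup_image, ← sup_eq_iSup_sup_compact_le]
  obtain ⟨_, ⟨k, ⟨hk, hkv⟩, rfl⟩, hak⟩ :=
    (CompleteLattice.isCompactElement_iff_le_of_directed_sSup_le L a).mp ha _
      (Set.Nonempty.image _ (⟨⊥, isCompactElement_bot, bot_le⟩ : S.Nonempty)) hdir hsup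
  exact ⟨k, hk, hkv, hak⟩

end CompactElements

section phiV

variable {L : Type*} [CompleteLattice L] {w w' a b x : L}

theorem phiV_of_le (h : a ≤ x ⊔ w) : phiV w a b x = x ⊔ w ⊔ b := if_pos h

theorem phiV_of_not_le (h : ¬a ≤ x ⊔ w) : phiV w a b x = x ⊔ w := if_neg h

theorem sup_le_phiV : x ⊔ w ≤ phiV w a b x := by
  unfold phiV
  split_ifs
  · exact le_sup_left
  · exact le_rfl

theorem phiV_mono (hw : w ≤ w') : phiV w a b x ≤ phiV w' a b x := by
  have hxw : x ⊔ w ≤ x ⊔ w' := sup_le_sup_left hw x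
  by_cases h : a ≤ x ⊔ w
  · rw [phiV_of_le h, phiV_of_le (h.trans hxw)]
    exact sup_le_sup_right hxw b
  · rw [phiV_of_not_le h]
    exact hxw.trans sup_le_phiV

end phiV

theorem phiV_eq_sup_compact_general {L : Type*} [CompleteLattice L] [IsCompactlyGenerated L]
    (a b : L) (ha : IsCompactElement a) (v : L) :
    ∀ x : L, phiV v a b x =
      ⨆ k ∈ {k : L | IsCompactElement k ∧ k ≤ v}, phiV k a b x := by
  intro x
  refine le_antisymm ?_ (iSup₂_le fun k hk => phiV_mono hk.2)
  have hxv : x ⊔ v ≤ ⨆ k ∈ {k : L | IsCompactElement k ∧ k ≤ v}, phiV k a b x :=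
    (sup_eq_iSup_sup_compact_le x v).trans_le (iSup₂_mono fun _ _ => sup_le_phiV)
  by_cases h : a ≤ x ⊔ v
  · obtain ⟨k, hk, hkv, hak⟩ := ha.exists_compact_le_of_le_sup h
    have hb : b ≤ phiV k a b x := (phiV_of_le hak).symm ▸ le_sup_right
    rw [phiV_of_le h]
    exact sup_le hxv (hb.trans (le_iSup₂_of_le k ⟨hk, hkv⟩ le_rfl))
  · rwa [phiV_of_not_le h]

/-- For compact `a, b` and arbitrary `v` in an algebraic lattice, `φ^v_{a,b}` is
the pointwise join of the operators `φ^k_{a,b}` over the compact elements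
`k ≤ v`. -/
theorem phiV_eq_sup_compact {L : Type*} [CompleteLattice L] [IsCompactlyGenerated L]
    (a b : L) (ha : IsCompactElement a)
    (hb : IsCompactElement b) (v : L) :
    ∀ x : L, phiV v a b x =
      ⨆ k ∈ {k : L | IsCompactElement k ∧ k ≤ v}, phiV k a b x :=
  phiV_eq_sup_compact_general a b ha v
end
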